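/- Let x ∈ 𝔹 with F(x) ≠ 0 (so x is not a Z-eigenvector of A), let d be a Newton direction at x, and let σ ∈ (0,1). Then there exists ᾱ > 0 such that for all α ∈ (0, ᾱ], θ(x(α)) ≤ θ(x) − σ α ‖F(x)‖² < θ(x); in particular d is a curve descent direction of θ at x. -/

import Mathlib

open scoped RealInnerProductSpace

noncomputable section

/-- Euclidean space `ℝ^n`. -/
abbrev Euc (n : ℕ) : Type := EuclideanSpace ℝ (Fin n)

/-- An `m`-th order tensor on `ℝ^n`, viewed as a continuous `m`-multilinear form. -/
abbrev Tensor (m n : ℕ) : Type := ContinuousMultilinearMap ℝ (fun _ : Fin m => Euc n) ℝ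

/-- A tensor is symmetric if it is invariant under every permutation of its arguments. -/
def IsSymmTensor {m n : ℕ} (A : Tensor m n) : Prop :=
  ∀ (e : Equiv.Perm (Fin m)) (v : Fin m → Euc n), A (v ∘ e) = A v

/-- `A x^m`, the homogeneous form `A (x, …, x)`. -/
def tpow {m n : ℕ} (A : Tensor m n) (x : Euc n) : ℝ := A (fun _ => x)

/-- The last index of `Fin m`. -/
def lastIdx {m : ℕ} (_hm : 2 ≤ m) : Fin m := ⟨m - 1, by omega⟩

/-- The second to last index of `Fin m`. -/
def sndIdx {m : ℕ} (_hm : 2 ≤ m) : Fin m := ⟨m - 2, by omega⟩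

lemma sndIdx_ne_lastIdx {m : ℕ} (hm : 2 ≤ m) : sndIdx hm ≠ lastIdx hm := by
  simp only [sndIdx, lastIdx, Fin.mk.injEq, ne_eq]
  omega

/-- `A x^{m-1}`: the unique vector with `⟪A x^{m-1}, v⟫ = A (x, …, x, v)` for all `v`. -/
def tvec {m n : ℕ} (A : Tensor m n) (hm : 2 ≤ m) (x : Euc n) : Euc n :=
  (InnerProductSpace.toDual ℝ (Euc n)).symm
    (A.toContinuousLinearMap (fun _ => x) (lastIdx hm))

/-- `F(x) = A x^{m-1} - (A x^m) • x`. -/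
def Fvec {m n : ℕ} (A : Tensor m n) (hm : 2 ≤ m) (x : Euc n) : Euc n :=
  tvec A hm x - tpow A x • x

/-- `φ(x) = (1/m) A x^m`. -/
def phi {m n : ℕ} (A : Tensor m n) (x : Euc n) : ℝ := (1 / (m : ℝ)) * tpow A x

/-- Orthogonal projection `P_x d = d - ⟪x, d⟫ x` (for `x` a unit vector). -/
def Pproj {n : ℕ} (x d : Euc n) : Euc n := d - ⟪x, d⟫ • x

/-- `x(α) = (x + α d)/‖x + α d‖`, the projection of `x + α d` onto the unit sphere. -/
def xcur {n : ℕ} (x d : Euc n) (α : ℝ) : Euc n := ‖x + α • d‖⁻¹ • (x + α • d)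

/-- `w(x, d)`: the unique vector with `⟪w(x, d), v⟫ = A (x, …, x, d, v)` for all `v`. -/
def wvec {m n : ℕ} (A : Tensor m n) (hm : 2 ≤ m) (x d : Euc n) : Euc n :=
  (InnerProductSpace.toDual ℝ (Euc n)).symm
    (A.toContinuousLinearMap (Function.update (fun _ => x) (sndIdx hm) d) (lastIdx hm))

/-- `A (x, …, x, d, d)`. -/
def A2 {m n : ℕ} (A : Tensor m n) (hm : 2 ≤ m) (x d : Euc n) : ℝ :=
  A (Function.update (Function.update (fun _ => x) (sndIdx hm) d) (lastIdx hm) d)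

lemma wvec_add {m n : ℕ} (A : Tensor m n) (hm : 2 ≤ m) (x d₁ d₂ : Euc n) :
    wvec A hm x (d₁ + d₂) = wvec A hm x d₁ + wvec A hm x d₂ := by
  unfold wvec
  rw [← map_add]
  congr 1
  ext v
  simp only [ContinuousMultilinearMap.toContinuousLinearMap_apply, ContinuousLinearMap.add_apply]
  rw [Function.update_comm (sndIdx_ne_lastIdx hm), Function.update_comm (sndIdx_ne_lastIdx hm),
    Function.update_comm (sndIdx_ne_lastIdx hm)]
  exact A.map_update_add _ _ _ _

lemma wvec_smul {m n : ℕ} (A : Tensor m n) (hm : 2 ≤ m) (x : Euc n) (c : ℝ) (d : Euc n) :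
    wvec A hm x (c • d) = c • wvec A hm x d := by
  unfold wvec
  rw [← map_smul]
  congr 1
  ext v
  simp only [ContinuousMultilinearMap.toContinuousLinearMap_apply,
    ContinuousLinearMap.smul_apply, smul_eq_mul]
  rw [Function.update_comm (sndIdx_ne_lastIdx hm), Function.update_comm (sndIdx_ne_lastIdx hm)]
  exact A.map_update_smul _ _ _ _

/-- The Jacobian `F'(x) d = (m-1) w(x,d) - (A x^m) d - m ⟪A x^{m-1}, d⟫ x`. -/
def FderivL {m n : ℕ} (A : Tensor m n) (hm : 2 ≤ m) (x : Euc n) : Euc n →L[ℝ] Euc n :=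
  LinearMap.toContinuousLinearMap
  { toFun := fun d =>
      ((m : ℝ) - 1) • wvec A hm x d - tpow A x • d - ((m : ℝ) * ⟪tvec A hm x, d⟫) • x
    map_add' := by
      intro d₁ d₂
      try simp only
      rw [wvec_add, inner_add_right]
      module
    map_smul' := by
      intro c d
      simp only [RingHom.id_apply]
      rw [wvec_smul, inner_smul_right]
      module }

/-- A Newton direction at `x`: `⟪x, d⟫ = 0` and `P_x (F'(x) d + F(x)) = 0`. -/
def NewtonDir {m n : ℕ} (A : Tensor m n) (hm : 2 ≤ m) (x d : Euc n) : Prop :=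
  ⟪x, d⟫ = 0 ∧ Pproj x (FderivL A hm x d + Fvec A hm x) = 0

/-- The residual function `θ(x) = (1/2)‖F(x)‖²`. -/
def theta {m n : ℕ} (A : Tensor m n) (hm : 2 ≤ m) (x : Euc n) : ℝ :=
  (1 / 2) * ‖Fvec A hm x‖ ^ 2

/-- Assumption (A): second-order sufficient condition at the KKT point `x̄`. -/
def AssumpA {m n : ℕ} (A : Tensor m n) (hm : 2 ≤ m) (xb : Euc n) (lam : ℝ) : Prop :=
  ‖xb‖ = 1 ∧ tvec A hm xb = lam • xb ∧ lam = tpow A xb ∧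
    ∀ d : Euc n, d ≠ 0 → ⟪xb, d⟫ = 0 →
      0 < ((m : ℝ) - 1) * A2 A hm xb d - lam * ‖d‖ ^ 2

end

/-!
Along the curve `α ↦ x(α)` one has `x(0) = x` and, since `⟪x, d⟫ = 0`, `x'(0) = d`; by the chain
rule `(θ ∘ x)'(0) = ⟪F(x), F'(x) d⟫`, where symmetry of `A` is what makes `F'(x)` the derivative
of `F`. The Newton equation makes `F'(x) d + F(x)` parallel to `x`,
while `F(x) ⟂ x` on the sphere, so `(θ ∘ x)'(0) = -‖F(x)‖² < -σ ‖F(x)‖²`, and the Armijo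
inequality holds for all small `α > 0` by the definition of the derivative.
-/

open Function

namespace IsSymmTensor

variable {m n : ℕ} {A : Tensor m n}

theorem apply_update_const (hA : IsSymmTensor A) (x v : Euc n) (i k : Fin m) :
    A (update (fun _ => x) i v) = A (update (fun _ => x) k v) := by
  rw [← hA (Equiv.swap i k), update_comp_equiv]
  simp [comp_def]

theorem apply_update_update_const (hA : IsSymmTensor A) (x u v : Euc n) {i j k : Fin m}
    (hi : i ≠ k) (hj : j ≠ k) :
    A (update (update (fun _ => x) i u) k v) = A (update (update (fun _ => x) j u) k v) := by
  rw [← hA (Equiv.swap i j), update_comp_equiv, update_comp_equiv]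
  simp [comp_def, Equiv.swap_apply_of_ne_of_ne hi.symm hj.symm]

end IsSymmTensor

section Derivatives

variable {m n : ℕ}

theorem inner_tvec (A : Tensor m n) (hm : 2 ≤ m) (x v : Euc n) :
    ⟪tvec A hm x, v⟫ = A (update (fun _ => x) (lastIdx hm) v) := by
  rw [tvec, InnerProductSpace.toDual_symm_apply,
    ContinuousMultilinearMap.toContinuousLinearMap_apply]

theorem inner_wvec (A : Tensor m n) (hm : 2 ≤ m) (x d v : Euc n) :
    ⟪wvec A hm x d, v⟫ = A (update (update (fun _ => x) (sndIdx hm) d) (lastIdx hm) v) := by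
  rw [wvec, InnerProductSpace.toDual_symm_apply,
    ContinuousMultilinearMap.toContinuousLinearMap_apply]

theorem inner_tvec_self (A : Tensor m n) (hm : 2 ≤ m) (x : Euc n) :
    ⟪tvec A hm x, x⟫ = tpow A x := by
  rw [inner_tvec, tpow, update_eq_self]

noncomputable def wvecL (A : Tensor m n) (hm : 2 ≤ m) (x : Euc n) : Euc n →L[ℝ] Euc n :=
  LinearMap.toContinuousLinearMap
    { toFun := wvec A hm x, map_add' := wvec_add A hm x, map_smul' := wvec_smul A hm x }

@[simp]
theorem wvecL_apply (A : Tensor m n) (hm : 2 ≤ m) (x d : Euc n) :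
    wvecL A hm x d = wvec A hm x d :=
  rfl

theorem hasFDerivAt_tpow {A : Tensor m n} (hA : IsSymmTensor A) (hm : 2 ≤ m) (x : Euc n) :
    HasFDerivAt (tpow A) ((m : ℝ) • innerSL ℝ (tvec A hm x)) x := by
  have hdiag :=
    (ContinuousLinearMap.pi fun _ : Fin m => ContinuousLinearMap.id ℝ (Euc n)).hasFDerivAt (x := x)
  refine (A.hasFDerivAt (fun _ => x)).comp x hdiag |>.congr_fderiv ?_
  ext v
  simp [ContinuousMultilinearMap.linearDeriv_apply, hA.apply_update_const x v _ (lastIdx hm),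
    inner_tvec]

theorem hasFDerivAt_apply_update_last {A : Tensor m n} (hA : IsSymmTensor A) (hm : 2 ≤ m)
    (c x : Euc n) :
    HasFDerivAt (fun y => A (update (fun _ => y) (lastIdx hm) c))
      (((m : ℝ) - 1) • (innerSL ℝ c ∘L wvecL A hm x)) x := by
  set L : Euc n →L[ℝ] (Fin m → Euc n) :=
    ContinuousLinearMap.pi fun j => if j = lastIdx hm then 0 else ContinuousLinearMap.id ℝ (Euc n)
  have hL : HasFDerivAt (fun y => update (fun _ : Fin m => y) (lastIdx hm) c) L x := by
    refine hasFDerivAt_pi.2 fun j => ?_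
    by_cases hj : j = lastIdx hm
    · subst hj; simpa [L] using hasFDerivAt_const c x
    · simp only [hj, if_false, update_of_ne hj]
      exact hasFDerivAt_id x
  refine (A.hasFDerivAt _).comp x hL |>.congr_fderiv ?_
  ext v
  simp only [ContinuousLinearMap.comp_apply, ContinuousLinearMap.coe_pi',
    ContinuousMultilinearMap.linearDeriv_apply, smul_apply, wvecL_apply, coe_innerSL_apply,
    smul_eq_mul, L]
  -- by symmetry, each of the `m - 1` slots other than the last contributes `⟪c, w(x, v)⟫`
  have hterm : ∀ i, A (update (update (fun _ => x) (lastIdx hm) c) i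
      ((if i = lastIdx hm then 0 else ContinuousLinearMap.id ℝ (Euc n)) v))
        = if i = lastIdx hm then 0 else ⟪c, wvec A hm x v⟫ := by
    intro i
    split_ifs with hi
    · subst hi
      rw [update_idem, zero_apply]
      exact A.map_update_zero _ _
    · rw [ContinuousLinearMap.id_apply, ← update_comm hi, real_inner_comm, inner_wvec,
        hA.apply_update_update_const x v c hi (sndIdx_ne_lastIdx hm)]
  simp only [hterm, Finset.sum_ite, Finset.sum_const_zero, Finset.sum_const, Finset.filter_ne',
    Finset.card_erase_of_mem (Finset.mem_univ _), Finset.card_univ, Fintype.card_fin, zero_add,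
    nsmul_eq_mul]
  rw [Nat.cast_sub (by omega), Nat.cast_one]

theorem hasFDerivAt_tvec {A : Tensor m n} (hA : IsSymmTensor A) (hm : 2 ≤ m) (x : Euc n) :
    HasFDerivAt (tvec A hm) (((m : ℝ) - 1) • wvecL A hm x) x := by
  rw [← hasFDerivWithinAt_univ, hasFDerivWithinAt_euclidean]
  intro i
  have h := hasFDerivAt_apply_update_last hA hm (EuclideanSpace.single i 1) x
  simp only [← inner_tvec, EuclideanSpace.inner_single_right, one_mul, conj_trivial] at h
  refine h.hasFDerivWithinAt.congr_fderiv ?_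
  ext v
  simp [EuclideanSpace.inner_single_left]

theorem hasFDerivAt_Fvec {A : Tensor m n} (hA : IsSymmTensor A) (hm : 2 ≤ m) (x : Euc n) :
    HasFDerivAt (Fvec A hm) (FderivL A hm x) x := by
  refine (hasFDerivAt_tvec hA hm x).sub ((hasFDerivAt_tpow hA hm x).smul (hasFDerivAt_id x))
    |>.congr_fderiv ?_
  ext1 v
  simp [FderivL]
  module

end Derivatives
section Curve

variable {n : ℕ}

theorem xcur_zero {x : Euc n} (hx : ‖x‖ = 1) (d : Euc n) : xcur x d 0 = x := by
  simp [xcur, hx]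

theorem hasDerivAt_xcur_zero {x d : Euc n} (hx : ‖x‖ = 1) (hxd : ⟪x, d⟫ = 0) :
    HasDerivAt (xcur x d) d 0 := by
  have hline : HasDerivAt (fun α : ℝ => x + α • d) d 0 := by
    simpa using ((hasDerivAt_id (0 : ℝ)).smul_const d).const_add x
  have hnorm : HasDerivAt (fun α : ℝ => ‖x + α • d‖) 0 0 := by
    have h := hline.norm_sq.sqrt (by simp [hx])
    simpa [hxd, Real.sqrt_sq (norm_nonneg _)] using h
  exact ((hnorm.fun_inv (by simp [hx])).fun_smul hline).congr_deriv (by simp [hx])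

end Curve

theorem exists_Ioc_lt_add_mul_of_hasDerivAt {f : ℝ → ℝ} {f' c t : ℝ} (hf : HasDerivAt f f' t)
    (hc : f' < c) : ∃ ε > 0, ∀ α ∈ Set.Ioc 0 ε, f (t + α) < f t + c * α := by
  have hslope := hf.hasDerivWithinAt.limsup_slope_le' (s := Set.Ioi t) (lt_irrefl t) hc
  obtain ⟨u, hu, hsub⟩ := mem_nhdsGT_iff_exists_Ioc_subset.1 hslope
  refine ⟨u - t, sub_pos.2 hu, fun α ⟨hα0, hαu⟩ => ?_⟩
  have h := @hsub (t + α) ⟨by linarith, by linarith⟩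
  simp only [Set.mem_ofPred_eq, slope_def_field, add_sub_cancel_left] at h
  have := (div_lt_iff₀ hα0).1 h
  linarith

section Newton

variable {m n : ℕ}

theorem inner_eq_zero_of_Pproj_eq_zero {x v y : Euc n} (hv : Pproj x v = 0) (hy : ⟪y, x⟫ = 0) :
    ⟪y, v⟫ = 0 := by
  rw [Pproj, sub_eq_zero] at hv
  rw [hv, real_inner_smul_right, hy, mul_zero]

theorem inner_Fvec_self (A : Tensor m n) (hm : 2 ≤ m) {x : Euc n} (hx : ‖x‖ = 1) :
    ⟪Fvec A hm x, x⟫ = 0 := by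
  rw [Fvec, inner_sub_left, inner_tvec_self, real_inner_smul_left, real_inner_self_eq_norm_sq, hx]
  ring

theorem NewtonDir.inner_Fvec_FderivL {A : Tensor m n} {hm : 2 ≤ m} {x d : Euc n}
    (hNd : NewtonDir A hm x d) (hx : ‖x‖ = 1) :
    ⟪Fvec A hm x, FderivL A hm x d⟫ = -‖Fvec A hm x‖ ^ 2 := by
  have h := inner_eq_zero_of_Pproj_eq_zero hNd.2 (inner_Fvec_self A hm hx)
  rw [inner_add_right, real_inner_self_eq_norm_sq] at h
  linarith

theorem NewtonDir.hasDerivAt_theta_xcur {A : Tensor m n} (hA : IsSymmTensor A) {hm : 2 ≤ m}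
    {x d : Euc n} (hNd : NewtonDir A hm x d) (hx : ‖x‖ = 1) :
    HasDerivAt (fun α => theta A hm (xcur x d α)) (-‖Fvec A hm x‖ ^ 2) 0 := by
  have hF := (hasFDerivAt_Fvec hA hm x).comp_hasDerivAt_of_eq 0 (hasDerivAt_xcur_zero hx hNd.1)
    (xcur_zero hx d).symm
  have h := hF.norm_sq.const_mul (1 / 2 : ℝ)
  rw [comp_apply, xcur_zero hx d, hNd.inner_Fvec_FderivL hx] at h
  exact h.congr_deriv (by ring)

end Newton

theorem stmt18_general {m n : ℕ} (hm : 2 ≤ m) (A : Tensor m n) (hA : IsSymmTensor A)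
    (x : Euc n) (hx : ‖x‖ = 1) (hFx : Fvec A hm x ≠ 0)
    (d : Euc n) (hNd : NewtonDir A hm x d) (σ : ℝ) (hσ : σ ∈ Set.Ioo (0 : ℝ) 1) :
    ∃ αbar > 0, ∀ α ∈ Set.Ioc (0 : ℝ) αbar,
      theta A hm (xcur x d α) ≤ theta A hm x - σ * α * ‖Fvec A hm x‖ ^ 2 ∧
      theta A hm (xcur x d α) < theta A hm x := by
  obtain ⟨hσ0, hσ1⟩ := hσ
  have hF : 0 < ‖Fvec A hm x‖ ^ 2 := by positivity
  obtain ⟨ε, hε, hdesc⟩ := exists_Ioc_lt_add_mul_of_hasDerivAt (hNd.hasDerivAt_theta_xcur hA hx)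
    (c := -(σ * ‖Fvec A hm x‖ ^ 2)) (by nlinarith)
  refine ⟨ε, hε, fun α hα => ?_⟩
  have h := hdesc α hα
  rw [zero_add, xcur_zero hx d] at h
  have : 0 < σ * α * ‖Fvec A hm x‖ ^ 2 := by have := hα.1; positivity
  constructor <;> nlinarith

/-- a Newton direction at a non-eigenvector is a curve descent direction of the
residual function `θ`, with the Armijo-type inequality for all sufficiently small `α > 0`. -/
theorem stmt18 {m n : ℕ} (hn : 1 ≤ n) (hm : 2 ≤ m) (A : Tensor m n) (hA : IsSymmTensor A)
    (x : Euc n) (hx : ‖x‖ = 1) (hFx : Fvec A hm x ≠ 0)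
    (d : Euc n) (hNd : NewtonDir A hm x d) (σ : ℝ) (hσ : σ ∈ Set.Ioo (0 : ℝ) 1) :
    ∃ αbar > 0, ∀ α ∈ Set.Ioc (0 : ℝ) αbar,
      theta A hm (xcur x d α) ≤ theta A hm x - σ * α * ‖Fvec A hm x‖ ^ 2 ∧
      theta A hm (xcur x d α) < theta A hm x :=
  stmt18_general hm A hA x hx hFx d hNd σ hσ
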